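/- arXiv:2508.04518 — 2 statements merged into one kernel-verified Lean document; each statement's English description precedes it below -/
import Mathlib

section
/- Let T be a tree on 2m vertices that has a perfect matching, where m ≥ 2, and let f be a strictly convex real-valued function. Then H_f(T) ≤ f(m) + (m−1)·f(2) + m·f(1), with equality only if T is isomorphic to the tree F_{2m} obtained from the star S_{m+1} by attaching one pendent edge to each of its m−1 pendent vertices. -/
open scoped Classical

/-- The vertex-degree function index `H_f(G) = Σ_{u ∈ V(G)} f(d(u))`. -/
noncomputable def Hf {V : Type*} [Fintype V] (G : SimpleGraph V) (f : ℝ → ℝ) : ℝ :=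
  ∑ v, f (G.degree v)

/-- The degree sequence of a graph, as a multiset of vertex degrees. -/
noncomputable def degSeq {V : Type*} [Fintype V] (G : SimpleGraph V) : Multiset ℕ :=
  Finset.univ.val.map (fun v => G.degree v)

/-- The tree `F_{2m}` on `2m` vertices, obtained from the star `S_{m+1}`
(with center `0` and pendent vertices `1, …, m`) by attaching one pendent edge to
each of the `m - 1` pendent vertices `1, …, m - 1` (the new vertex attached to `i`
being `i + m`). -/
def Fgraph (m : ℕ) : SimpleGraph (Fin (2 * m)) :=
  SimpleGraph.fromRel (fun i j =>
    (i.val = 0 ∧ 1 ≤ j.val ∧ j.val ≤ m) ∨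
    (1 ≤ i.val ∧ i.val ≤ m - 1 ∧ j.val = i.val + m))

open Finset

section Aux

lemma Fgraph_adj (m : ℕ) : ∀ i j : Fin (2*m), (Fgraph m).Adj i j ↔ (i ≠ j ∧
    ((i.val = 0 ∧ 1 ≤ j.val ∧ j.val ≤ m) ∨ (1 ≤ i.val ∧ i.val ≤ m - 1 ∧ j.val = i.val + m) ∨
     (j.val = 0 ∧ 1 ≤ i.val ∧ i.val ≤ m) ∨ (1 ≤ j.val ∧ j.val ≤ m - 1 ∧ i.val = j.val + m))) := by
  intro i j
  simp only [Fgraph, SimpleGraph.fromRel_adj]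
  tauto

lemma no_tri {V : Type*} {T : SimpleGraph V} (hT : T.IsAcyclic) {a b c : V}
    (h1 : T.Adj a b) (h2 : T.Adj b c) (h3 : T.Adj a c) : False := by
  have hpu := SimpleGraph.isAcyclic_iff_path_unique.mp hT
  have hab := h1.ne
  have hbc := h2.ne
  have hac := h3.ne
  let p1 : T.Path a c := ⟨h3.toWalk, by simp [SimpleGraph.Walk.isPath_def, hac]⟩
  let p2 : T.Path a c := ⟨SimpleGraph.Walk.cons h1 h2.toWalk, by
    simp [SimpleGraph.Walk.isPath_def, hab, hbc, hac]⟩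
  have h := hpu p1 p2
  have hlen : (p1 : T.Walk a c).length = (p2 : T.Walk a c).length := by rw [h]
  simp [p1, p2] at hlen

lemma no_quad {V : Type*} {T : SimpleGraph V} (hT : T.IsAcyclic) {a b c d : V}
    (h1 : T.Adj a b) (h2 : T.Adj b c) (h3 : T.Adj a d) (h4 : T.Adj d c)
    (hbd : b ≠ d) (hac : a ≠ c) : False := by
  have hpu := SimpleGraph.isAcyclic_iff_path_unique.mp hT
  let p1 : T.Path a c := ⟨SimpleGraph.Walk.cons h1 h2.toWalk, by
    simp [SimpleGraph.Walk.isPath_def, h1.ne, h2.ne, hac]⟩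
  let p2 : T.Path a c := ⟨SimpleGraph.Walk.cons h3 h4.toWalk, by
    simp [SimpleGraph.Walk.isPath_def, h3.ne, h4.ne, hac]⟩
  have h := hpu p1 p2
  have hsup : (p1 : T.Walk a c).support = (p2 : T.Walk a c).support := by rw [h]
  simp [p1, p2] at hsup
  exact hbd hsup

lemma leaf_unique {V : Type*} [Fintype V] {T : SimpleGraph V} {v w w' : V}
    (h : T.degree v = 1) (h1 : T.Adj v w) (h2 : T.Adj v w') : w = w' := by
  obtain ⟨a, ha⟩ := Finset.card_eq_one.mp (by rw [← T.card_neighborFinset_eq_degree] at h; exact h)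
  have hw := (SimpleGraph.mem_neighborFinset T v w).mpr h1
  have hw' := (SimpleGraph.mem_neighborFinset T v w').mpr h2
  rw [ha, Finset.mem_singleton] at hw hw'
  rw [hw, hw']

lemma not_both_leaves {V : Type*} [Fintype V] {T : SimpleGraph V} (hconn : T.Connected)
    (hcard : 3 ≤ Fintype.card V) {v w : V} (hadj : T.Adj v w)
    (hv : T.degree v = 1) (hw : T.degree w = 1) : False := by
  have : ∃ u : V, u ≠ v ∧ u ≠ w := by
    by_contra h
    push_neg at h
    have hsub : (Finset.univ : Finset V) ⊆ {v, w} := fun u _ => by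
      by_cases h1 : u = v
      · simp [h1]
      · simp [h u h1]
    have := Finset.card_le_card hsub
    simp [Finset.card_univ] at this
    have hle : Finset.card {v, w} ≤ 2 := Finset.card_insert_le _ _ |>.trans (by simp)
    omega
  obtain ⟨u, huv, huw⟩ := this
  obtain ⟨walk⟩ := hconn.preconnected v u
  obtain ⟨d, _, hdS, hdnS⟩ := walk.exists_boundary_dart {v, w} (by simp) (by simp; tauto)
  have hd := d.adj
  rcases hdS with rfl | hdS
  · have := leaf_unique hv hd hadj
    exact hdnS (by simp [this])
  · simp only [Set.mem_singleton_iff] at hdS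
    rw [hdS] at hd
    have := leaf_unique hw hd hadj.symm
    exact hdnS (by simp [this])

lemma chord_lt {f : ℝ → ℝ} (hf : StrictConvexOn ℝ Set.univ f) {x y z : ℝ}
    (hxy : x < y) (hyz : y < z) : (z - x) * f y < (z - y) * f x + (y - x) * f z := by
  have hzx : (0:ℝ) < z - x := by linarith
  have h := hf.2 (Set.mem_univ x) (Set.mem_univ z) (by linarith : x ≠ z)
    (show (0:ℝ) < (z - y)/(z-x) from div_pos (by linarith) hzx)
    (show (0:ℝ) < (y - x)/(z-x) from div_pos (by linarith) hzx)
    (by field_simp; ring)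
  rw [smul_eq_mul, smul_eq_mul] at h
  have hy : (z - y)/(z-x) * x + (y - x)/(z-x) * z = y := by field_simp; ring
  rw [hy] at h
  calc (z - x) * f y < (z-x) * ((z - y)/(z-x) * f x + (y - x)/(z-x) * f z) :=
        (mul_lt_mul_iff_right₀ hzx).mpr h
    _ = (z - y) * f x + (y - x) * f z := by field_simp

lemma chord_le {f : ℝ → ℝ} (hf : StrictConvexOn ℝ Set.univ f) {x y z : ℝ}
    (hxy : x ≤ y) (hyz : y ≤ z) : (z - x) * f y ≤ (z - y) * f x + (y - x) * f z := by
  rcases eq_or_lt_of_le hxy with rfl | h1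
  · have : (x - x) * f z = 0 := by ring
    linarith [le_refl ((z - x) * f x)]
  rcases eq_or_lt_of_le hyz with rfl | h2
  · have h3 : (y - y) * f x = 0 := by ring
    linarith [le_refl ((y - x) * f y)]
  exact (chord_lt hf h1 h2).le

/-- The reconstruction lemma: a tree on `2m` vertices with a perfect matching having
a vertex of degree `m`, all other degrees `1` or `2`, and exactly `m-1` vertices of
degree `2` other than `c`, is isomorphic to `Fgraph m`. -/
lemma reconstruct {V : Type*} [Fintype V] {T : SimpleGraph V} (hT : T.IsTree)
    {m : ℕ} (hm : 2 ≤ m) (hcard : Fintype.card V = 2 * m)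
    {M : T.Subgraph} (hM : M.IsPerfectMatching)
    {c : V} (hc : T.degree c = m)
    (hdeg : ∀ v, v ≠ c → T.degree v = 1 ∨ T.degree v = 2)
    (hcount : (Finset.univ.filter (fun v => v ≠ c ∧ T.degree v = 2)).card = m - 1) :
    Nonempty (T ≃g Fgraph m) := by
  classical
  have hacy := hT.IsAcyclic
  have hpart : ∀ v, ∃! w, M.Adj v w := SimpleGraph.Subgraph.isPerfectMatching_iff.mp hM
  choose p hp hup using hpart
  have hTp : ∀ v, T.Adj v (p v) := fun v => M.adj_sub (hp v)
  have hinv : ∀ v, p (p v) = v := fun v => (hup (p v) v (hp v).symm).symm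
  have hinjp : Function.Injective p := fun a b h => by rw [← hinv a, h, hinv b]
  set N := T.neighborFinset c with hN
  have hNcard : N.card = m := by rw [hN, T.card_neighborFinset_eq_degree, hc]
  have hNmem : ∀ v, v ∈ N ↔ T.Adj c v := fun v => T.mem_neighborFinset c v
  have hcN : c ∉ N := by rw [hNmem]; exact T.irrefl
  set A := N.filter (fun v => T.degree v = 2) with hA
  set B := N.filter (fun v => T.degree v = 1) with hB
  have hAN : A ⊆ N := Finset.filter_subset _ _
  have hBN : B ⊆ N := Finset.filter_subset _ _
  have hNc : ∀ v ∈ N, v ≠ c := fun v hv => ((hNmem v).mp hv).ne'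
  have hABcard : A.card + B.card = m := by
    have heqf : N.filter (fun v => T.degree v = 2) = N.filter (fun v => ¬ T.degree v = 1) := by
      ext v
      simp only [Finset.mem_filter, and_congr_right_iff]
      intro hv
      rcases hdeg v (hNc v hv) with h | h <;> omega
    rw [hA, hB, heqf, ← hNcard, Nat.add_comm]
    exact Finset.card_filter_add_card_filter_not _
  -- the other neighbor of each vertex in A
  have hxaux : ∀ a : V, ∃ y, a ∈ A → T.Adj a y ∧ y ≠ c ∧ (∀ z, T.Adj a z → z ≠ c → z = y) := by
    intro a
    by_cases ha : a ∈ A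
    · have hd2 : T.degree a = 2 := (Finset.mem_filter.mp ha).2
      have hac : T.Adj c a := (hNmem a).mp (hAN ha)
      have hcmem : c ∈ T.neighborFinset a := (T.mem_neighborFinset a c).mpr hac.symm
      have h1 : ((T.neighborFinset a).erase c).card = 1 := by
        rw [Finset.card_erase_of_mem hcmem, T.card_neighborFinset_eq_degree, hd2]
      obtain ⟨y, hy⟩ := Finset.card_eq_one.mp h1
      have hymem : y ∈ (T.neighborFinset a).erase c := by rw [hy]; simp
      refine ⟨y, fun _ => ⟨?_, (Finset.mem_erase.mp hymem).1, ?_⟩⟩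
      · exact (T.mem_neighborFinset a y).mp (Finset.mem_of_mem_erase hymem)
      · intro z hz hzc
        have : z ∈ (T.neighborFinset a).erase c :=
          Finset.mem_erase.mpr ⟨hzc, (T.mem_neighborFinset a z).mpr hz⟩
        rw [hy] at this
        exact Finset.mem_singleton.mp this
    · exact ⟨a, fun h => absurd h ha⟩
  choose x hx using hxaux
  have hxadj : ∀ a ∈ A, T.Adj a (x a) := fun a ha => (hx a ha).1
  have hxc : ∀ a ∈ A, x a ≠ c := fun a ha => (hx a ha).2.1
  have hxuniq : ∀ a ∈ A, ∀ z, T.Adj a z → z ≠ c → z = x a := fun a ha => (hx a ha).2.2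
  have hAadjc : ∀ a ∈ A, T.Adj c a := fun a ha => (hNmem a).mp (hAN ha)
  have hxnotN : ∀ a ∈ A, x a ∉ N := by
    intro a ha hxa
    exact no_tri hacy (hAadjc a ha) (hxadj a ha) ((hNmem _).mp hxa)
  have hxinj : ∀ a ∈ A, ∀ a' ∈ A, x a = x a' → a = a' := by
    intro a ha a' ha' hxx
    by_contra hne
    exact no_quad hacy (hAadjc a ha) (hxadj a ha) (hAadjc a' ha')
      (hxx ▸ hxadj a' ha') hne (Ne.symm (hxc a ha))
  set R := (Finset.univ \ insert c N) with hR
  have hRmem : ∀ v, v ∈ R ↔ (v ≠ c ∧ v ∉ N) := by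
    intro v
    simp only [hR, Finset.mem_sdiff, Finset.mem_univ, true_and, Finset.mem_insert, not_or]
  have hRcard : R.card = m - 1 := by
    rw [hR, Finset.card_sdiff_of_subset (Finset.subset_univ _), Finset.card_univ, hcard,
      Finset.card_insert_of_notMem hcN, hNcard]
    omega
  have hxR : ∀ a ∈ A, x a ∈ R := fun a ha => (hRmem _).mpr ⟨hxc a ha, hxnotN a ha⟩
  have hxinjOn : Set.InjOn x ↑A := fun u hu v hv h =>
    hxinj u (Finset.mem_coe.mp hu) v (Finset.mem_coe.mp hv) h
  have hAcard_le : A.card ≤ m - 1 := by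
    have := Finset.card_le_card_of_injOn x hxR hxinjOn
    omega
  have hBc : ∀ b ∈ B, p b = c := by
    intro b hb
    have hd1b : T.degree b = 1 := (Finset.mem_filter.mp hb).2
    have hadj : T.Adj c b := (hNmem b).mp (hBN hb)
    exact leaf_unique hd1b (hTp b) hadj.symm
  have hB1 : B.card ≤ 1 :=
    Finset.card_le_one.mpr (fun b hb b' hb' => hinjp (by rw [hBc b hb, hBc b' hb']))
  have hAcard : A.card = m - 1 := by omega
  have hBcard : B.card = 1 := by omega
  obtain ⟨b, hBb⟩ := Finset.card_eq_one.mp hBcard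
  have hbB : b ∈ B := by rw [hBb]; simp
  have hbN : b ∈ N := hBN hbB
  have hbdeg : T.degree b = 1 := (Finset.mem_filter.mp hbB).2
  have hbA : b ∉ A := fun h => by
    have := (Finset.mem_filter.mp h).2
    omega
  have himg : A.image x = R := by
    apply Finset.eq_of_subset_of_card_le
    · intro r hr
      obtain ⟨a, ha, rfl⟩ := Finset.mem_image.mp hr
      exact hxR a ha
    · rw [Finset.card_image_of_injOn hxinjOn, hAcard, hRcard]
  have hRx : ∀ r ∈ R, ∃ a ∈ A, x a = r := by
    intro r hr
    rw [← himg] at hr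
    exact Finset.mem_image.mp hr
  have hRA : ∀ r ∈ R, r ∉ A := fun r hr hrA => ((hRmem r).mp hr).2 (hAN hrA)
  have hD2 : Finset.univ.filter (fun v => v ≠ c ∧ T.degree v = 2) = A := by
    symm
    apply Finset.eq_of_subset_of_card_le
    · intro a ha
      exact Finset.mem_filter.mpr ⟨Finset.mem_univ a, hNc a (hAN ha), (Finset.mem_filter.mp ha).2⟩
    · rw [hcount, hAcard]
  have hRdeg1 : ∀ r ∈ R, T.degree r = 1 := by
    intro r hr
    have hrc : r ≠ c := ((hRmem r).mp hr).1
    rcases hdeg r hrc with h | h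
    · exact h
    · exfalso
      exact hRA r hr (hD2 ▸ Finset.mem_filter.mpr ⟨Finset.mem_univ r, hrc, h⟩)
  -- full edge characterization
  have hadjchar : ∀ u v, T.Adj u v ↔
      ((u = c ∧ v ∈ N) ∨ (v = c ∧ u ∈ N) ∨ (u ∈ A ∧ v = x u) ∨ (v ∈ A ∧ u = x v)) := by
    intro u v
    constructor
    · intro huv
      by_cases hu : u = c
      · exact Or.inl ⟨hu, (hNmem v).mpr (hu ▸ huv)⟩
      by_cases hv : v = c
      · exact Or.inr (Or.inl ⟨hv, (hNmem u).mpr (hv ▸ huv).symm⟩)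
      by_cases huN : u ∈ N
      · by_cases huA : u ∈ A
        · exact Or.inr (Or.inr (Or.inl ⟨huA, hxuniq u huA v huv hv⟩))
        · have huB : u ∈ B := by
            rcases hdeg u hu with h | h
            · exact Finset.mem_filter.mpr ⟨huN, h⟩
            · exact absurd (Finset.mem_filter.mpr ⟨huN, h⟩) huA
          have : v = c := leaf_unique (Finset.mem_filter.mp huB).2 huv ((hNmem u).mp huN).symm
          exact absurd this hv
      · have huR : u ∈ R := (hRmem u).mpr ⟨hu, huN⟩
        obtain ⟨a, haA, hxa⟩ := hRx u huR
        have : v = a := leaf_unique (hRdeg1 u huR) huv (hxa ▸ (hxadj a haA).symm)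
        refine Or.inr (Or.inr (Or.inr ⟨this ▸ haA, ?_⟩))
        rw [this, ← hxa]
    · rintro (⟨rfl, hv⟩ | ⟨rfl, hu⟩ | ⟨huA, rfl⟩ | ⟨hvA, rfl⟩)
      · exact (hNmem v).mp hv
      · exact ((hNmem u).mp hu).symm
      · exact hxadj u huA
      · exact (hxadj v hvA).symm
  -- derived adjacency facts
  have naA : ∀ a ∈ A, ∀ a' ∈ A, ¬ T.Adj a a' := by
    intro a ha a' ha' hadj
    rcases (hadjchar a a').mp hadj with ⟨h1, _⟩ | ⟨h1, _⟩ | ⟨_, h2⟩ | ⟨_, h2⟩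
    · exact hNc a (hAN ha) h1
    · exact hNc a' (hAN ha') h1
    · exact hxnotN a ha (h2 ▸ hAN ha')
    · exact hxnotN a' ha' (h2 ▸ hAN ha)
  have nab : ∀ a ∈ A, ¬ T.Adj a b := by
    intro a ha hadj
    rcases (hadjchar a b).mp hadj with ⟨h1, _⟩ | ⟨h1, _⟩ | ⟨_, h2⟩ | ⟨h1, _⟩
    · exact hNc a (hAN ha) h1
    · exact hNc b hbN h1
    · exact hxnotN a ha (h2 ▸ hbN)
    · exact hbA h1
  have ncR : ∀ r ∈ R, ¬ T.Adj c r := by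
    intro r hr hadj
    rcases (hadjchar c r).mp hadj with ⟨_, h2⟩ | ⟨h1, _⟩ | ⟨h1, _⟩ | ⟨h1, _⟩
    · exact ((hRmem r).mp hr).2 h2
    · exact ((hRmem r).mp hr).1 h1
    · exact hcN (hAN h1)
    · exact hRA r hr h1
  have nbR : ∀ r ∈ R, ¬ T.Adj b r := by
    intro r hr hadj
    rcases (hadjchar b r).mp hadj with ⟨h1, _⟩ | ⟨h1, _⟩ | ⟨h1, _⟩ | ⟨h1, _⟩
    · exact hNc b hbN h1
    · exact ((hRmem r).mp hr).1 h1
    · exact hbA h1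
    · exact hRA r hr h1
  have nRR : ∀ r ∈ R, ∀ r' ∈ R, ¬ T.Adj r r' := by
    intro r hr r' hr' hadj
    rcases (hadjchar r r').mp hadj with ⟨h1, _⟩ | ⟨h1, _⟩ | ⟨h1, _⟩ | ⟨h1, _⟩
    · exact ((hRmem r).mp hr).1 h1
    · exact ((hRmem r').mp hr').1 h1
    · exact hRA r hr h1
    · exact hRA r' hr' h1
  have aAx : ∀ a ∈ A, ∀ a' ∈ A, (T.Adj a (x a') ↔ a = a') := by
    intro a ha a' ha'
    constructor
    · intro hadj
      rcases (hadjchar a (x a')).mp hadj with ⟨h1, _⟩ | ⟨h1, _⟩ | ⟨_, h2⟩ | ⟨h1, _⟩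
      · exact absurd h1 (hNc a (hAN ha))
      · exact absurd h1 (hxc a' ha')
      · exact hxinj a ha a' ha' h2.symm
      · exact absurd h1 (hRA (x a') (hxR a' ha'))
    · rintro rfl
      exact hxadj a ha
  have acb : T.Adj c b := (hNmem b).mp hbN
  -- the enumeration of A and the map ψ
  set eA : {v // v ∈ A} ≃ Fin (m-1) := A.equivFinOfCardEq hAcard with heA
  set ψ : Fin (2*m) → V := fun i =>
    if _h0 : i.val = 0 then c
    else if _h1 : i.val ≤ m - 1 then ↑(eA.symm ⟨i.val - 1, by omega⟩)
    else if _h2 : i.val = m then b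
    else x ↑(eA.symm ⟨i.val - m - 1, by have := i.isLt; omega⟩) with hψdef
  have hψ0 : ∀ i : Fin (2*m), i.val = 0 → ψ i = c := by
    intro i h
    simp only [hψdef]
    rw [dif_pos h]
  have hψA : ∀ (i : Fin (2*m)) (h1 : 1 ≤ i.val) (h2 : i.val ≤ m-1),
      ψ i = ↑(eA.symm ⟨i.val - 1, by omega⟩) := by
    intro i h1 h2
    simp only [hψdef]
    rw [dif_neg (by omega), dif_pos h2]
  have hψb : ∀ i : Fin (2*m), i.val = m → ψ i = b := by
    intro i h
    simp only [hψdef]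
    rw [dif_neg (by omega), dif_neg (by omega), dif_pos h]
  have hψR : ∀ (i : Fin (2*m)) (h1 : m+1 ≤ i.val),
      ψ i = x ↑(eA.symm ⟨i.val - m - 1, by have := i.isLt; omega⟩) := by
    intro i h1
    simp only [hψdef]
    rw [dif_neg (by omega), dif_neg (by omega), dif_neg (by omega)]
  have hmemA : ∀ (k : Fin (m-1)), (↑(eA.symm k) : V) ∈ A := fun k => (eA.symm k).2
  have hsub : ∀ (k k' : Fin (m-1)), (↑(eA.symm k) : V) = ↑(eA.symm k') → k = k' :=
    fun k k' h => eA.symm.injective (Subtype.coe_injective h)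
  have hinjψ : Function.Injective ψ := by
    intro i j hij
    have hi := i.isLt
    have hj := j.isLt
    apply Fin.ext
    rcases (by omega : i.val = 0 ∨ (1 ≤ i.val ∧ i.val ≤ m-1) ∨ i.val = m ∨ m+1 ≤ i.val) with
      hZi | ⟨hi1, hi2⟩ | hZi | hZi <;>
    rcases (by omega : j.val = 0 ∨ (1 ≤ j.val ∧ j.val ≤ m-1) ∨ j.val = m ∨ m+1 ≤ j.val) with
      hZj | ⟨hj1, hj2⟩ | hZj | hZj
    · omega
    · exfalso
      rw [hψ0 i hZi, hψA j hj1 hj2] at hij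
      have hmem := hmemA ⟨j.val - 1, by omega⟩
      rw [← hij] at hmem
      exact hcN (hAN hmem)
    · exfalso
      rw [hψ0 i hZi, hψb j hZj] at hij
      rw [← hij] at hbN
      exact hcN hbN
    · exfalso
      rw [hψ0 i hZi, hψR j hZj] at hij
      have hmem := hxR _ (hmemA ⟨j.val - m - 1, by omega⟩)
      rw [← hij] at hmem
      exact ((hRmem c).mp hmem).1 rfl
    · exfalso
      rw [hψ0 j hZj, hψA i hi1 hi2] at hij
      have hmem := hmemA ⟨i.val - 1, by omega⟩
      rw [hij] at hmem
      exact hcN (hAN hmem)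
    · rw [hψA i hi1 hi2, hψA j hj1 hj2] at hij
      have h5 := hsub _ _ hij
      simp only [Fin.mk.injEq] at h5
      omega
    · exfalso
      rw [hψA i hi1 hi2, hψb j hZj] at hij
      have hmem := hmemA ⟨i.val - 1, by omega⟩
      rw [hij] at hmem
      exact hbA hmem
    · exfalso
      rw [hψA i hi1 hi2, hψR j hZj] at hij
      have hmem := hxR _ (hmemA ⟨j.val - m - 1, by omega⟩)
      rw [← hij] at hmem
      exact ((hRmem _).mp hmem).2 (hAN (hmemA ⟨i.val - 1, by omega⟩))
    · exfalso
      rw [hψb i hZi, hψ0 j hZj] at hij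
      rw [hij] at hbN
      exact hcN hbN
    · exfalso
      rw [hψb i hZi, hψA j hj1 hj2] at hij
      have hmem := hmemA ⟨j.val - 1, by omega⟩
      rw [← hij] at hmem
      exact hbA hmem
    · omega
    · exfalso
      rw [hψb i hZi, hψR j hZj] at hij
      have hmem := hxR _ (hmemA ⟨j.val - m - 1, by omega⟩)
      rw [← hij] at hmem
      exact ((hRmem _).mp hmem).2 hbN
    · exfalso
      rw [hψR i hZi, hψ0 j hZj] at hij
      have hmem := hxR _ (hmemA ⟨i.val - m - 1, by omega⟩)
      rw [hij] at hmem
      exact ((hRmem c).mp hmem).1 rfl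
    · exfalso
      rw [hψR i hZi, hψA j hj1 hj2] at hij
      have hmem := hxR _ (hmemA ⟨i.val - m - 1, by omega⟩)
      rw [hij] at hmem
      exact ((hRmem _).mp hmem).2 (hAN (hmemA ⟨j.val - 1, by omega⟩))
    · exfalso
      rw [hψR i hZi, hψb j hZj] at hij
      have hmem := hxR _ (hmemA ⟨i.val - m - 1, by omega⟩)
      rw [hij] at hmem
      exact ((hRmem _).mp hmem).2 hbN
    · rw [hψR i hZi, hψR j hZj] at hij
      have h5 := hsub _ _ (hxinj _ (hmemA _) _ (hmemA _) hij)
      simp only [Fin.mk.injEq] at h5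
      omega
  have hbij : Function.Bijective ψ :=
    (Fintype.bijective_iff_injective_and_card ψ).mpr ⟨hinjψ, by rw [Fintype.card_fin, hcard]⟩
  have hFadj := Fgraph_adj m
  have hmaprel : ∀ i j : Fin (2*m), T.Adj (ψ i) (ψ j) ↔ (Fgraph m).Adj i j := by
    intro i j
    rw [hFadj]
    have hi := i.isLt
    have hj := j.isLt
    have hvne : i.val ≠ j.val → i ≠ j := fun h h' => h (congrArg Fin.val h')
    rcases (by omega : i.val = 0 ∨ (1 ≤ i.val ∧ i.val ≤ m-1) ∨ i.val = m ∨ m+1 ≤ i.val) with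
      hZi | ⟨hi1, hi2⟩ | hZi | hZi <;>
    rcases (by omega : j.val = 0 ∨ (1 ≤ j.val ∧ j.val ≤ m-1) ∨ j.val = m ∨ m+1 ≤ j.val) with
      hZj | ⟨hj1, hj2⟩ | hZj | hZj
    · -- 0,0
      rw [hψ0 i hZi, hψ0 j hZj]
      constructor
      · intro h
        exact absurd h (T.loopless.irrefl c)
      · rintro ⟨hne', _⟩
        exact absurd (Fin.ext (by omega : i.val = j.val)) hne'
    · -- 0,A
      rw [hψ0 i hZi, hψA j hj1 hj2]
      constructor
      · intro _
        exact ⟨hvne (by omega), Or.inl ⟨hZi, by omega, by omega⟩⟩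
      · intro _
        exact hAadjc _ (hmemA _)
    · -- 0,b
      rw [hψ0 i hZi, hψb j hZj]
      constructor
      · intro _
        exact ⟨hvne (by omega), Or.inl ⟨hZi, by omega, by omega⟩⟩
      · intro _
        exact acb
    · -- 0,R
      rw [hψ0 i hZi, hψR j hZj]
      constructor
      · intro h
        exact absurd h (ncR _ (hxR _ (hmemA _)))
      · rintro ⟨_, hor⟩
        exfalso
        omega
    · -- A,0
      rw [hψA i hi1 hi2, hψ0 j hZj]
      constructor
      · intro _
        exact ⟨hvne (by omega), Or.inr (Or.inr (Or.inl ⟨hZj, by omega, by omega⟩))⟩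
      · intro _
        exact (hAadjc _ (hmemA _)).symm
    · -- A,A
      rw [hψA i hi1 hi2, hψA j hj1 hj2]
      constructor
      · intro h
        exact absurd h (naA _ (hmemA _) _ (hmemA _))
      · rintro ⟨hne', hor⟩
        exfalso
        rcases hor with ⟨h, _⟩ | ⟨_, _, h⟩ | ⟨h, _⟩ | ⟨_, _, h⟩ <;> omega
    · -- A,b
      rw [hψA i hi1 hi2, hψb j hZj]
      constructor
      · intro h
        exact absurd h (nab _ (hmemA _))
      · rintro ⟨_, hor⟩
        exfalso
        omega
    · -- A,R
      rw [hψA i hi1 hi2, hψR j hZj]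
      rw [aAx _ (hmemA _) _ (hmemA _)]
      constructor
      · intro h
        have h6 : i.val - 1 = j.val - m - 1 := congrArg Fin.val (hsub _ _ h)
        exact ⟨hvne (by omega), Or.inr (Or.inl ⟨by omega, by omega, by omega⟩)⟩
      · rintro ⟨_, hor⟩
        have hji : j.val = i.val + m := by omega
        have : (⟨i.val - 1, by omega⟩ : Fin (m-1)) = ⟨j.val - m - 1, by omega⟩ :=
          Fin.ext (show i.val - 1 = j.val - m - 1 by omega)
        rw [this]
    · -- b,0
      rw [hψb i hZi, hψ0 j hZj]
      constructor
      · intro _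
        exact ⟨hvne (by omega), Or.inr (Or.inr (Or.inl ⟨hZj, by omega, by omega⟩))⟩
      · intro _
        exact acb.symm
    · -- b,A
      rw [hψb i hZi, hψA j hj1 hj2]
      constructor
      · intro h
        exact absurd h.symm (nab _ (hmemA _))
      · rintro ⟨_, hor⟩
        exfalso
        omega
    · -- b,b
      rw [hψb i hZi, hψb j hZj]
      constructor
      · intro h
        exact absurd h (T.loopless.irrefl b)
      · rintro ⟨hne', _⟩
        exact absurd (Fin.ext (by omega : i.val = j.val)) hne'
    · -- b,R
      rw [hψb i hZi, hψR j hZj]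
      constructor
      · intro h
        exact absurd h (nbR _ (hxR _ (hmemA _)))
      · rintro ⟨_, hor⟩
        exfalso
        omega
    · -- R,0
      rw [hψR i hZi, hψ0 j hZj]
      constructor
      · intro h
        exact absurd h.symm (ncR _ (hxR _ (hmemA _)))
      · rintro ⟨_, hor⟩
        exfalso
        omega
    · -- R,A
      rw [hψR i hZi, hψA j hj1 hj2]
      rw [SimpleGraph.adj_comm]
      rw [aAx _ (hmemA _) _ (hmemA _)]
      constructor
      · intro h
        have h6 : j.val - 1 = i.val - m - 1 := congrArg Fin.val (hsub _ _ h)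
        exact ⟨hvne (by omega), Or.inr (Or.inr (Or.inr ⟨by omega, by omega, by omega⟩))⟩
      · rintro ⟨_, hor⟩
        have hij : i.val = j.val + m := by omega
        have : (⟨j.val - 1, by omega⟩ : Fin (m-1)) = ⟨i.val - m - 1, by omega⟩ :=
          Fin.ext (show j.val - 1 = i.val - m - 1 by omega)
        rw [this]
    · -- R,b
      rw [hψR i hZi, hψb j hZj]
      constructor
      · intro h
        exact absurd h.symm (nbR _ (hxR _ (hmemA _)))
      · rintro ⟨_, hor⟩
        exfalso
        omega
    · -- R,R
      rw [hψR i hZi, hψR j hZj]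
      constructor
      · intro h
        exact absurd h (nRR _ (hxR _ (hmemA _)) _ (hxR _ (hmemA _)))
      · rintro ⟨hne', hor⟩
        exfalso
        rcases hor with ⟨h, _⟩ | ⟨_, _, h⟩ | ⟨h, _⟩ | ⟨_, _, h⟩ <;> try omega
  exact ⟨(SimpleGraph.Iso.symm ⟨Equiv.ofBijective ψ hbij, fun {i j} => hmaprel i j⟩)⟩

end Aux

theorem stmt14 {V : Type*} [Fintype V] (T : SimpleGraph V) (hT : T.IsTree)
    (m : ℕ) (hm : 2 ≤ m) (hcard : Fintype.card V = 2 * m)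
    (hpm : ∃ M : T.Subgraph, M.IsPerfectMatching)
    (f : ℝ → ℝ) (hf : StrictConvexOn ℝ Set.univ f) :
    Hf T f ≤ f (m : ℝ) + ((m : ℝ) - 1) * f 2 + (m : ℝ) * f 1 ∧
    (Hf T f = f (m : ℝ) + ((m : ℝ) - 1) * f 2 + (m : ℝ) * f 1 →
      Nonempty (T ≃g Fgraph m)) := by
  classical
  obtain ⟨M, hM⟩ := hpm
  have hpart : ∀ v, ∃! w, M.Adj v w := SimpleGraph.Subgraph.isPerfectMatching_iff.mp hM
  choose p hp hup using hpart
  have hTp : ∀ v, T.Adj v (p v) := fun v => M.adj_sub (hp v)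
  have hinv : ∀ v, p (p v) = v := fun v => (hup (p v) v (hp v).symm).symm
  have hinjp : Function.Injective p := fun a b h => by rw [← hinv a, h, hinv b]
  -- degree bounds
  have hd1 : ∀ v, 1 ≤ T.degree v := fun v =>
    (T.degree_pos_iff_exists_adj v).mpr ⟨p v, hTp v⟩
  have hdm : ∀ v, T.degree v ≤ m := by
    intro v
    set N := T.neighborFinset v with hN
    have hpvN : p v ∈ N := (T.mem_neighborFinset v _).mpr (hTp v)
    have hmaps : ∀ w ∈ N.erase (p v), p w ∈ univ \ insert v N := by
      intro w hw
      obtain ⟨hwne, hwN⟩ := Finset.mem_erase.mp hw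
      have hTvw : T.Adj v w := (T.mem_neighborFinset v w).mp hwN
      simp only [Finset.mem_sdiff, Finset.mem_univ, true_and, Finset.mem_insert, not_or]
      refine ⟨fun h => ?_, fun hpwN => ?_⟩
      · exact hwne (hup v w (by rw [← h]; exact (hp w).symm))
      · exact no_tri hT.IsAcyclic hTvw (hTp w) ((T.mem_neighborFinset v _).mp hpwN)
    have hcle := Finset.card_le_card_of_injOn p hmaps (fun a _ b _ h => hinjp h)
    have h1 : (N.erase (p v)).card = N.card - 1 := Finset.card_erase_of_mem hpvN
    have h2 : (univ \ insert v N).card = Fintype.card V - (insert v N).card := by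
      rw [Finset.card_sdiff_of_subset (Finset.subset_univ _), Finset.card_univ]
    have h3 : (insert v N).card = N.card + 1 := by
      rw [Finset.card_insert_of_notMem (by simp [hN])]
    have h4 : (insert v N).card ≤ Fintype.card V := Finset.card_le_card (Finset.subset_univ _) |>.trans_eq Finset.card_univ
    have h5 : N.card = T.degree v := T.card_neighborFinset_eq_degree v
    have h6 := hd1 v
    omega
  have hcard3 : 3 ≤ Fintype.card V := by omega
  -- leaves
  set L := univ.filter (fun v => T.degree v = 1) with hLdef
  set S2 := univ.filter (fun v => ¬ T.degree v = 1) with hS2def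
  have hS2mem : ∀ v, v ∈ S2 ↔ 2 ≤ T.degree v := by
    intro v
    simp only [hS2def, Finset.mem_filter, Finset.mem_univ, true_and]
    have := hd1 v
    omega
  have hLmem : ∀ v, v ∈ L ↔ T.degree v = 1 := by
    intro v; simp [hLdef]
  have hLm : L.card ≤ m := by
    have hmaps : ∀ v ∈ L, p v ∈ univ \ L := by
      intro v hv
      simp only [Finset.mem_sdiff, Finset.mem_univ, true_and]
      rw [hLmem]
      exact fun hpv => not_both_leaves hT.isConnected hcard3 (hTp v) ((hLmem v).mp hv) hpv
    have hcle := Finset.card_le_card_of_injOn p hmaps (fun a _ b _ h => hinjp h)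
    have h2 : (univ \ L).card = Fintype.card V - L.card := by
      rw [Finset.card_sdiff_of_subset (Finset.subset_univ _), Finset.card_univ]
    have h3 : L.card ≤ Fintype.card V := Finset.card_le_card (Finset.subset_univ _) |>.trans_eq Finset.card_univ
    omega
  have hLS : L.card + S2.card = 2 * m := by
    rw [← hcard, ← Finset.card_univ]
    exact Finset.card_filter_add_card_filter_not _
  -- degree sums
  have hsumN : ∑ v, T.degree v = 4 * m - 2 := by
    have he := hT.card_edgeFinset
    rw [hcard] at he
    rw [SimpleGraph.sum_degrees_eq_twice_card_edges]
    omega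
  have hsplitN : ∑ v ∈ L, T.degree v + ∑ v ∈ S2, T.degree v = 4 * m - 2 := by
    rw [← hsumN]
    exact Finset.sum_filter_add_sum_filter_not _ _ _
  have hsumLN : ∑ v ∈ L, T.degree v = L.card := by
    rw [Finset.sum_congr rfl (fun v hv => (hLmem v).mp hv)]
    simp
  have hsumS2N : ∑ v ∈ S2, T.degree v = 4 * m - 2 - L.card := by omega
  -- real versions
  have hLfR : ∑ v ∈ L, f (T.degree v) = (L.card : ℝ) * f 1 := by
    rw [Finset.sum_congr rfl (fun v hv => by rw [(hLmem v).mp hv, Nat.cast_one])]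
    simp [mul_comm]
  have hsplitR : ∀ g : V → ℝ, ∑ v ∈ L, g v + ∑ v ∈ S2, g v = ∑ v, g v := fun g =>
    Finset.sum_filter_add_sum_filter_not _ _ g
  have hHfeq : Hf T f = (L.card : ℝ) * f 1 + ∑ v ∈ S2, f (T.degree v) := by
    rw [Hf, ← hsplitR (fun v => f (T.degree v)), hLfR]
  have hsumS2R : ∑ v ∈ S2, (T.degree v : ℝ) = 4 * (m:ℝ) - 2 - L.card := by
    have : ((∑ v ∈ S2, T.degree v : ℕ) : ℝ) = ∑ v ∈ S2, ((T.degree v : ℝ)) := by push_cast; rfl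
    rw [← this, hsumS2N]
    have h1 : L.card + 2 ≤ 4 * m := by omega
    have h2 : (2:ℕ) ≤ 4 * m := by omega
    rw [Nat.cast_sub (by omega), Nat.cast_sub h2]
    push_cast
    ring
  have hS2cardR : (S2.card : ℝ) = 2 * (m:ℝ) - L.card := by
    have : (S2.card : ℕ) = 2 * m - L.card := by omega
    rw [this, Nat.cast_sub (by omega)]
    push_cast
    ring
  -- slack
  set E := f m - ((m:ℝ) - 1) * f 2 + ((m:ℝ) - 2) * f 1 with hEdef
  have hE0 : 0 ≤ E := by
    have := chord_le hf (x := 1) (y := 2) (z := (m:ℝ)) (by norm_num)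
      (by exact_mod_cast Nat.ofNat_le_cast.mpr hm)
    rw [hEdef]; linarith
  set slack : V → ℝ := fun v =>
    ((m:ℝ) - T.degree v) * f 2 + ((T.degree v : ℝ) - 2) * f m - ((m:ℝ) - 2) * f (T.degree v)
    with hslackdef
  have hslack0 : ∀ v ∈ S2, 0 ≤ slack v := by
    intro v hv
    have h2 : (2:ℝ) ≤ (T.degree v : ℝ) := by exact_mod_cast (hS2mem v).mp hv
    have h3 : ((T.degree v : ℝ)) ≤ (m:ℝ) := by exact_mod_cast hdm v
    have := chord_le hf h2 h3
    rw [hslackdef]; dsimp only; linarith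
  have hslacksum : ∑ v ∈ S2, slack v
      = ((m:ℝ) * S2.card - (4*(m:ℝ) - 2 - L.card)) * f 2
        + ((4*(m:ℝ) - 2 - L.card) - 2 * S2.card) * f m
        - ((m:ℝ) - 2) * ∑ v ∈ S2, f (T.degree v) := by
    have e1 : ∑ v ∈ S2, ((m:ℝ) - T.degree v) = (m:ℝ) * S2.card - (4*(m:ℝ)-2-L.card) := by
      rw [Finset.sum_sub_distrib, Finset.sum_const, hsumS2R, nsmul_eq_mul]
      ring
    have e2 : ∑ v ∈ S2, ((T.degree v:ℝ) - 2) = (4*(m:ℝ)-2-L.card) - 2*S2.card := by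
      rw [Finset.sum_sub_distrib, Finset.sum_const, hsumS2R, nsmul_eq_mul]
      ring
    calc ∑ v ∈ S2, slack v
        = (∑ v ∈ S2, ((m:ℝ) - T.degree v)) * f 2 + (∑ v ∈ S2, ((T.degree v:ℝ)-2)) * f m
          - ((m:ℝ)-2) * ∑ v ∈ S2, f (T.degree v) := by
          rw [hslackdef]
          dsimp only
          rw [Finset.sum_sub_distrib, Finset.sum_add_distrib, Finset.sum_mul, Finset.sum_mul,
            Finset.mul_sum]
      _ = _ := by rw [e1, e2]
  have hkey : ((m:ℝ) - 2) * ((f m + ((m:ℝ)-1) * f 2 + (m:ℝ) * f 1) - Hf T f)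
      = ((m:ℝ) - L.card) * E + ∑ v ∈ S2, slack v := by
    rw [hHfeq, hslacksum, hEdef, hS2cardR]
    ring
  have hcLm : (L.card : ℝ) ≤ (m:ℝ) := by exact_mod_cast hLm
  have hssnn : 0 ≤ ∑ v ∈ S2, slack v := Finset.sum_nonneg hslack0
  rcases eq_or_lt_of_le hm with hm2 | hm3
  · -- m = 2 case
    have hdeg2 : ∀ v ∈ S2, T.degree v = 2 := by
      intro v hv
      have h1 := (hS2mem v).mp hv
      have h2 := hdm v
      omega
    have hsum2 : ∑ v ∈ S2, T.degree v = 2 * S2.card := by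
      rw [Finset.sum_congr rfl hdeg2]
      simp [mul_comm]
    have hL2 : L.card = 2 ∧ S2.card = 2 := by
      have h1 : L.card + 2 * S2.card = 4 * m - 2 := by omega
      omega
    have hS2f : ∑ v ∈ S2, f (T.degree v) = 2 * f 2 := by
      have : ∀ v ∈ S2, f (T.degree v) = f 2 := by
        intro v hv
        rw [hdeg2 v hv]
        norm_num
      rw [Finset.sum_congr rfl this, Finset.sum_const, hL2.2]
      simp [two_mul]
    have hmR : ((m:ℝ)) = 2 := by rw [← hm2]; norm_num
    have heqHf : Hf T f = f (m : ℝ) + ((m : ℝ) - 1) * f 2 + (m : ℝ) * f 1 := by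
      rw [hHfeq, hS2f, hL2.1, hmR]
      norm_num
      try ring
    refine ⟨le_of_eq heqHf, fun _ => ?_⟩
    obtain ⟨c, hcS⟩ := Finset.card_pos.mp (show 0 < S2.card by omega)
    have hcdeg : T.degree c = m := by rw [← hm2]; exact hdeg2 c hcS
    have hdeg' : ∀ v, v ≠ c → T.degree v = 1 ∨ T.degree v = 2 := by
      intro v _
      have h1 := hd1 v
      have h2 := hdm v
      omega
    have hcount : (Finset.univ.filter (fun v => v ≠ c ∧ T.degree v = 2)).card = m - 1 := by
      have heqf : Finset.univ.filter (fun v => v ≠ c ∧ T.degree v = 2) = S2.erase c := by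
        ext v
        simp only [Finset.mem_filter, Finset.mem_univ, true_and, Finset.mem_erase]
        constructor
        · rintro ⟨hvc, hv2⟩
          exact ⟨hvc, (hS2mem v).mpr (by omega)⟩
        · rintro ⟨hvc, hv⟩
          exact ⟨hvc, hdeg2 v hv⟩
      rw [heqf, Finset.card_erase_of_mem hcS, hL2.2]
      omega
    exact reconstruct hT hm hcard hM hcdeg hdeg' hcount
  · -- 3 ≤ m
    have hm2R : (2:ℝ) < (m:ℝ) := by exact_mod_cast hm3
    have hEpos : 0 < E := by
      have := chord_lt hf (x := 1) (y := 2) (z := (m:ℝ)) (by norm_num) hm2R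
      rw [hEdef]; linarith
    have hineq : Hf T f ≤ f (m : ℝ) + ((m : ℝ) - 1) * f 2 + (m : ℝ) * f 1 := by
      nlinarith [mul_nonneg (by linarith : (0:ℝ) ≤ (m:ℝ) - L.card) hE0]
    refine ⟨hineq, fun heq => ?_⟩
    -- equality analysis
    have hkey0 : ((m:ℝ) - L.card) * E + ∑ v ∈ S2, slack v = 0 := by
      rw [← hkey, heq]; ring
    have hcL : (L.card : ℝ) = (m:ℝ) := by
      by_contra hne
      have : (0:ℝ) < ((m:ℝ) - L.card) * E :=
        mul_pos (by cases lt_or_gt_of_ne hne with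
          | inl h => linarith
          | inr h => linarith) hEpos
      linarith
    have hLcardm : L.card = m := by exact_mod_cast hcL
    have hslackzero : ∑ v ∈ S2, slack v = 0 := by
      have : ((m:ℝ) - L.card) * E = 0 := by rw [hcL]; ring
      linarith
    have hzero : ∀ v ∈ S2, slack v = 0 :=
      (Finset.sum_eq_zero_iff_of_nonneg hslack0).mp hslackzero
    have hdeg2m : ∀ v ∈ S2, T.degree v = 2 ∨ T.degree v = m := by
      intro v hv
      by_contra hcon
      push_neg at hcon
      have h2 : 2 ≤ T.degree v := (hS2mem v).mp hv
      have h3 : T.degree v ≤ m := hdm v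
      have h2' : (2:ℝ) < (T.degree v : ℝ) := by
        have : 2 < T.degree v := by omega
        exact_mod_cast this
      have h3' : ((T.degree v : ℝ)) < (m:ℝ) := by
        have : T.degree v < m := by omega
        exact_mod_cast this
      have := chord_lt hf h2' h3'
      have := hzero v hv
      rw [hslackdef] at this
      dsimp only at this
      linarith
    -- count vertices of degree m in S2
    have hS2card : S2.card = m := by omega
    have hsumS2' : ∑ v ∈ S2, T.degree v = 3 * m - 2 := by omega
    set K := S2.filter (fun v => T.degree v = m) with hKdef
    have hKsplit : K.card + (S2.filter (fun v => ¬ T.degree v = m)).card = m := by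
      rw [hKdef, ← hS2card]
      exact Finset.card_filter_add_card_filter_not _
    have hsumsplit : ∑ v ∈ K, T.degree v + ∑ v ∈ S2.filter (fun v => ¬ T.degree v = m), T.degree v
        = 3 * m - 2 := by
      rw [← hsumS2', hKdef]
      exact Finset.sum_filter_add_sum_filter_not _ _ _
    have hsumK : ∑ v ∈ K, T.degree v = K.card * m := by
      rw [Finset.sum_congr rfl (fun v hv => (Finset.mem_filter.mp hv).2)]
      simp [mul_comm, hKdef]
    have hsumK' : ∑ v ∈ S2.filter (fun v => ¬ T.degree v = m), T.degree v
        = (S2.filter (fun v => ¬ T.degree v = m)).card * 2 := by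
      have hall : ∀ v ∈ S2.filter (fun v => ¬ T.degree v = m), T.degree v = 2 := by
        intro v hv
        have h1 := Finset.mem_filter.mp hv
        rcases hdeg2m v h1.1 with h | h
        · exact h
        · exact absurd h h1.2
      rw [Finset.sum_congr rfl hall]
      simp [mul_comm]
    have hK1 : K.card = 1 := by
      have heqn : K.card * m + (m - K.card) * 2 = 3 * m - 2 := by
        have hfc : (S2.filter (fun v => ¬ T.degree v = m)).card = m - K.card := by omega
        rw [← hfc, ← hsumK, ← hsumK']
        exact hsumsplit
      have hKle : K.card ≤ m := by omega
      have hm2' : m - 2 + 2 = m := by omega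
      have hkm : K.card * m = K.card * (m-2) + K.card * 2 := by
        conv_lhs => rw [← hm2']
        ring
      rw [hkm] at heqn
      generalize hgen : K.card * (m-2) = a at heqn
      have e : a = m - 2 := by omega
      have : K.card * (m - 2) = 1 * (m - 2) := by rw [hgen, e, one_mul]
      exact Nat.eq_of_mul_eq_mul_right (by omega) this
    obtain ⟨c, hcK⟩ := Finset.card_eq_one.mp hK1
    have hcdeg : T.degree c = m := by
      have : c ∈ K := by rw [hcK]; simp
      exact (Finset.mem_filter.mp this).2
    have hdeg' : ∀ v, v ≠ c → T.degree v = 1 ∨ T.degree v = 2 := by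
      intro v hvc
      by_cases hv : v ∈ S2
      · rcases hdeg2m v hv with h | h
        · right; exact h
        · exfalso
          have : v ∈ K := Finset.mem_filter.mpr ⟨hv, h⟩
          rw [hcK, Finset.mem_singleton] at this
          exact hvc this
      · left
        have := hd1 v
        have : ¬ (2 ≤ T.degree v) := fun h => hv ((hS2mem v).mpr h)
        omega
    have hcount : (Finset.univ.filter (fun v => v ≠ c ∧ T.degree v = 2)).card = m - 1 := by
      have heq2 : Finset.univ.filter (fun v => v ≠ c ∧ T.degree v = 2)
          = S2.filter (fun v => ¬ T.degree v = m) := by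
        ext v
        simp only [Finset.mem_filter, Finset.mem_univ, true_and]
        constructor
        · rintro ⟨hvc, hv2⟩
          refine ⟨(hS2mem v).mpr (by omega), by omega⟩
        · rintro ⟨hv, hvm⟩
          rcases hdeg2m v hv with h | h
          · refine ⟨fun hvc => ?_, h⟩
            rw [hvc] at h
            omega
          · exact absurd h hvm
      rw [heq2]
      omega
    exact reconstruct hT hm hcard hM hcdeg hdeg' hcount
end

section
/- Let T be a chemical tree on n vertices with exactly b branching vertices, where n ≥ 14 and 1 ≤ b ≤ n/2 − 1. Then Lz(T) ≥ 9b(n−4) + 4(n−2b−2)(n−3) + (b+2)(n−2), and equality holds if and only if the degree sequence of T consists of the value 3 with multiplicity b, the value 2 with multiplicity n−2b−2, and the value 1 with multiplicity b+2. -/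
open scoped Classical

/-- The Lanzhou index `Lz(G) = Σ_{u ∈ V(G)} d(u)² · (n − 1 − d(u))`,
where `n` is the number of vertices of `G`. -/
noncomputable def Lz {V : Type*} [Fintype V] (G : SimpleGraph V) : ℝ :=
  ∑ v, (G.degree v : ℝ) ^ 2 * ((Fintype.card V : ℝ) - 1 - (G.degree v : ℝ))

/-!
Write `n_k` for the number of vertices of degree `k`. In a tree `Σ n_k = n` and
`Σ k n_k = 2n - 2`, and every vertex of a chemical tree has degree `1, …, 4`. Since
`d²(n - 1 - d) = (8 - 2n) + (3n - 10)d + [d ≥ 3](2n - 14) + [d = 4](4n - 34)` for those `d`,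
summing over the vertices gives, with `b = n_3 + n_4`,
`Lz(T) = 9b(n - 4) + 4(n - 2b - 2)(n - 3) + (b + 2)(n - 2) + (4n - 34) n_4`.
For `n ≥ 9` the last term is nonnegative and vanishes exactly when `n_4 = 0`, and then the two
linear relations force `n_3 = b`, `n_2 = n - 2b - 2`, `n_1 = b + 2`.
-/

open Finset

lemma Finset.sum_one_two_three_four {M : Type*} [AddCommMonoid M] (f : ℕ → M) :
    ∑ k ∈ ({1, 2, 3, 4} : Finset ℕ), f k = f 1 + f 2 + f 3 + f 4 := by
  simp [add_assoc]

section DegreeCounts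

variable {V : Type*} [Fintype V] (G : SimpleGraph V)

lemma mem_degSeq {k : ℕ} : k ∈ degSeq G ↔ ∃ v, G.degree v = k := by
  simp [degSeq]

lemma count_degSeq (k : ℕ) : (degSeq G).count k = #{v | G.degree v = k} := by
  rw [degSeq, Multiset.count_map, ← filter_val, ← card_def]
  simp only [eq_comm]

variable {G} {t : Finset ℕ}

lemma sum_degree_eq_sum_count_degSeq {M : Type*} [AddCommMonoid M] (f : ℕ → M)
    (ht : ∀ v, G.degree v ∈ t) :
    ∑ v, f (G.degree v) = ∑ k ∈ t, (degSeq G).count k • f k := by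
  rw [← sum_fiberwise_of_maps_to (g := fun v => G.degree v) (fun v _ => ht v)]
  refine sum_congr rfl fun k _ => ?_
  rw [sum_congr rfl fun v hv => congrArg f (mem_filter.mp hv).2, sum_const,
    count_degSeq]

lemma degSeq_eq_sum_replicate (ht : ∀ v, G.degree v ∈ t) :
    degSeq G = ∑ k ∈ t, Multiset.replicate ((degSeq G).count k) k := by
  simp_rw [← Multiset.nsmul_singleton]
  rw [← sum_subset (s₁ := (degSeq G).toFinset), Multiset.toFinset_sum_count_nsmul_eq]
  · intro k hk
    obtain ⟨v, rfl⟩ := (mem_degSeq G).mp (Multiset.mem_toFinset.mp hk)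
    exact ht v
  · intro k _ hk
    rw [Multiset.count_eq_zero.mpr (Multiset.mem_toFinset.not.mp hk), zero_smul]

end DegreeCounts

namespace SimpleGraph.IsTree

variable {V : Type*} [Fintype V] {T : SimpleGraph V}

lemma sum_degrees_add_two (hT : T.IsTree) : ∑ v, T.degree v + 2 = 2 * Fintype.card V := by
  rw [T.sum_degrees_eq_twice_card_edges, ← hT.card_edgeFinset]
  ring

lemma degree_mem_of_degree_le_four (hT : T.IsTree) (hV : 2 ≤ Fintype.card V)
    (hchem : ∀ v, T.degree v ≤ 4) (v : V) : T.degree v ∈ ({1, 2, 3, 4} : Finset ℕ) := by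
  have : Nontrivial V := Fintype.one_lt_card_iff_nontrivial.mp hV
  have := hT.connected.preconnected.degree_pos_of_nontrivial v
  have := hchem v
  simp only [mem_insert, mem_singleton]
  omega

lemma count_degSeq_relations (hT : T.IsTree)
    (hdeg : ∀ v, T.degree v ∈ ({1, 2, 3, 4} : Finset ℕ)) :
    (degSeq T).count 1 + (degSeq T).count 2 + (degSeq T).count 3 + (degSeq T).count 4
        = Fintype.card V ∧
      (degSeq T).count 1 + 2 * (degSeq T).count 2 + 3 * (degSeq T).count 3
        + 4 * (degSeq T).count 4 + 2 = 2 * Fintype.card V ∧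
      #{v | 3 ≤ T.degree v} = (degSeq T).count 3 + (degSeq T).count 4 := by
  have hcard := sum_degree_eq_sum_count_degSeq (fun _ => 1) hdeg
  have hsum := sum_degree_eq_sum_count_degSeq id hdeg
  have hbranch := sum_degree_eq_sum_count_degSeq (fun k => if 3 ≤ k then 1 else 0) hdeg
  have htree := hT.sum_degrees_add_two
  rw [← card_filter] at hbranch
  simp only [sum_one_two_three_four, sum_const, card_univ, smul_eq_mul,
    id] at hcard hsum hbranch
  norm_num at hbranch
  exact ⟨by omega, by omega, hbranch⟩

lemma Lz_eq_add_mul_count_four (hT : T.IsTree)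
    (hdeg : ∀ v, T.degree v ∈ ({1, 2, 3, 4} : Finset ℕ)) :
    Lz T = 9 * (#{v | 3 ≤ T.degree v} : ℝ) * ((Fintype.card V : ℝ) - 4)
      + 4 * ((Fintype.card V : ℝ) - 2 * #{v | 3 ≤ T.degree v} - 2)
        * ((Fintype.card V : ℝ) - 3)
      + (#{v | 3 ≤ T.degree v} + 2) * ((Fintype.card V : ℝ) - 2)
      + (4 * (Fintype.card V : ℝ) - 34) * (degSeq T).count 4 := by
  obtain ⟨hcard, hsum, hbranch⟩ := count_degSeq_relations hT hdeg
  have hLz := sum_degree_eq_sum_count_degSeq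
    (fun k => (k : ℝ) ^ 2 * ((Fintype.card V : ℝ) - 1 - k)) hdeg
  rw [Lz, hLz, sum_one_two_three_four, hbranch]
  have hcardR := congrArg (Nat.cast (R := ℝ)) hcard
  have hsumR := congrArg (Nat.cast (R := ℝ)) hsum
  push_cast at hcardR hsumR ⊢
  linear_combination (8 - 2 * (Fintype.card V : ℝ)) * hcardR
    + (3 * (Fintype.card V : ℝ) - 10) * hsumR

lemma degSeq_eq_replicate_iff_count_four_eq_zero (hT : T.IsTree)
    (hdeg : ∀ v, T.degree v ∈ ({1, 2, 3, 4} : Finset ℕ)) :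
    degSeq T = Multiset.replicate #{v | 3 ≤ T.degree v} 3
        + Multiset.replicate (Fintype.card V - 2 * #{v | 3 ≤ T.degree v} - 2) 2
        + Multiset.replicate (#{v | 3 ≤ T.degree v} + 2) 1 ↔ (degSeq T).count 4 = 0 := by
  obtain ⟨hcard, hsum, hbranch⟩ := count_degSeq_relations hT hdeg
  refine ⟨fun h => by simp [h, Multiset.mem_replicate], fun h4 => ?_⟩
  have hc1 : (degSeq T).count 1 = #{v | 3 ≤ T.degree v} + 2 := by omega
  have hc2 : (degSeq T).count 2 = Fintype.card V - 2 * #{v | 3 ≤ T.degree v} - 2 := by omega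
  have hc3 : (degSeq T).count 3 = #{v | 3 ≤ T.degree v} := by omega
  have hdecomp := degSeq_eq_sum_replicate hdeg
  rw [sum_one_two_three_four, hc1, hc2, hc3, h4, Multiset.replicate_zero, add_zero]
    at hdecomp
  rw [hdecomp]
  abel

end SimpleGraph.IsTree

theorem stmt15_general {V : Type*} [Fintype V] (T : SimpleGraph V) (hT : T.IsTree)
    (hchem : ∀ v : V, T.degree v ≤ 4)
    (n b : ℕ) (hn : n = Fintype.card V) (hn14 : 14 ≤ n)
    (hb : b = (Finset.univ.filter (fun v => 3 ≤ T.degree v)).card) :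
    9 * (b : ℝ) * ((n : ℝ) - 4) + 4 * ((n : ℝ) - 2 * (b : ℝ) - 2) * ((n : ℝ) - 3)
      + ((b : ℝ) + 2) * ((n : ℝ) - 2) ≤ Lz T ∧
    (Lz T = 9 * (b : ℝ) * ((n : ℝ) - 4) + 4 * ((n : ℝ) - 2 * (b : ℝ) - 2) * ((n : ℝ) - 3)
        + ((b : ℝ) + 2) * ((n : ℝ) - 2) ↔
      degSeq T = Multiset.replicate b 3 + Multiset.replicate (n - 2 * b - 2) 2
        + Multiset.replicate (b + 2) 1) := by
  subst hn hb
  have hdeg := hT.degree_mem_of_degree_le_four (by omega) hchem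
  have hpos : (0 : ℝ) < 4 * (Fintype.card V : ℝ) - 34 := by
    have : (14 : ℝ) ≤ Fintype.card V := by exact_mod_cast hn14
    linarith
  rw [hT.Lz_eq_add_mul_count_four hdeg, hT.degSeq_eq_replicate_iff_count_four_eq_zero hdeg]
  refine ⟨le_add_of_nonneg_right (mul_nonneg hpos.le (Nat.cast_nonneg _)), ?_⟩
  rw [add_eq_left, mul_eq_zero, Nat.cast_eq_zero, or_iff_right hpos.ne']

theorem stmt15 {V : Type*} [Fintype V] (T : SimpleGraph V) (hT : T.IsTree)
    (hchem : ∀ v : V, T.degree v ≤ 4)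
    (n b : ℕ) (hn : n = Fintype.card V) (hn14 : 14 ≤ n)
    (hb : b = (Finset.univ.filter (fun v => 3 ≤ T.degree v)).card)
    (hb1 : 1 ≤ b) (hbn : (b : ℝ) ≤ (n : ℝ) / 2 - 1) :
    9 * (b : ℝ) * ((n : ℝ) - 4) + 4 * ((n : ℝ) - 2 * (b : ℝ) - 2) * ((n : ℝ) - 3)
      + ((b : ℝ) + 2) * ((n : ℝ) - 2) ≤ Lz T ∧
    (Lz T = 9 * (b : ℝ) * ((n : ℝ) - 4) + 4 * ((n : ℝ) - 2 * (b : ℝ) - 2) * ((n : ℝ) - 3)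
        + ((b : ℝ) + 2) * ((n : ℝ) - 2) ↔
      degSeq T = Multiset.replicate b 3 + Multiset.replicate (n - 2 * b - 2) 2
        + Multiset.replicate (b + 2) 1) :=
  stmt15_general T hT hchem n b hn hn14 hb
end
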